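/- arXiv:2406.06266 — 4 statements merged into one kernel-verified Lean document; each statement's English description precedes it below -/
import Mathlib

section
/- For real numbers K, K', K'' with K + K'' > 0, define w3 = e^{-2K'}(e^{2K} - e^{2K''}) / (e^{2(K+K'')} - 1). Then w3 ≤ 1 if and only if -tanh(K'') ≤ tanh(K) · tanh(K'). -/
open Real

theorem w3_le_one_iff (K K' K'' : ℝ) (h : K + K'' > 0) :
    exp (-2*K') * (exp (2*K) - exp (2*K'')) / (exp (2*(K+K'')) - 1) ≤ 1 ↔
      -tanh K'' ≤ tanh K * tanh K' := by
  have ht : ∀ x : ℝ, tanh x = (exp (2*x) - 1)/(exp (2*x) + 1) := by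
    intro x
    rw [tanh_eq_sinh_div_cosh, sinh_eq, cosh_eq, Real.exp_neg,
        show (2:ℝ)*x = x + x by ring, exp_add]
    have h1 := exp_pos x
    have h2 : exp x + (exp x)⁻¹ > 0 := by positivity
    field_simp
  have ha := exp_pos (2*K)
  have hb := exp_pos (2*K')
  have hc := exp_pos (2*K'')
  set a := exp (2*K) with hA
  set b := exp (2*K') with hB
  set c := exp (2*K'') with hC
  have hE : exp (2*(K+K'')) = a * c := by
    rw [hA, hC, ← exp_add]; ring_nf
  have hE' : exp (-2*K') = b⁻¹ := by
    rw [hB, ← Real.exp_neg]; ring_nf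
  have hD : (0:ℝ) < a * c - 1 := by
    rw [← hE]
    have : (0:ℝ) < 2*(K+K'') := by linarith
    have := Real.exp_lt_exp.mpr this
    simp only [Real.exp_zero] at this
    linarith
  rw [hE, hE', ht, ht, ht, div_le_one hD]
  have hb1 : (0:ℝ) < b := hb
  have h1 : b⁻¹ * (a - c) ≤ a * c - 1 ↔ a - c ≤ b * (a * c - 1) := by
    rw [inv_mul_le_iff₀ hb1]
  rw [h1]
  have hca : (0:ℝ) < c + 1 := by linarith
  have haa : (0:ℝ) < a + 1 := by linarith
  have hba : (0:ℝ) < b + 1 := by linarith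
  rw [div_mul_div_comm, neg_div', neg_sub, div_le_div_iff₀ hca (by positivity)]
  constructor <;> intro h' <;> nlinarith [mul_pos ha hc, mul_pos hb hc]
end

section
/- Fix κ, κ' with 0 < κ < κ' ≤ 1. Define β⁻ = -(1/4)log(κκ'), β⁺ = -(1/2)log κ, and for β ∈ (β⁻, β⁺) define γ(β) = ( (1/2)·log( (κ'-κ)/(κκ'·e^{2β} - e^{-2β}) ), β, β + (1/2)·log κ ). Then β⁻ < β⁺, the first coordinate is well-defined (i.e. κκ'·e^{2β} - e^{-2β} > 0 for β in this interval), and writing γ(β) = (K(β), K'(β), K''(β)), the quantities w2 = e^{2(K''-K')} and w3 = e^{-2K'}(e^{2K} - e^{2K''})/(e^{2(K+K'')} - 1) are constant along the curve, equal to κ and κ' respectively. -/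
/-!
Put `e = exp (2β)`. The endpoints of the interval are exactly the conditions `κκ'e² > 1`
(so the argument of the logarithm defining `K` is positive) and `κe < 1`. Along the curve
`exp (2K) = A := (κ' - κ)/(κκ'e - e⁻¹)` and `exp (2K'') = κe`, and a direct computation gives
`A - κe = κ'(1 - κ²e²)/(κκ'e - e⁻¹)` and `Aκe - 1 = e⁻¹(1 - κ²e²)/(κκ'e - e⁻¹)`,
whose quotient is `κ'e`.
-/

open Real

lemma exp_two_mul_half_mul_log {x : ℝ} (hx : 0 < x) : exp (2 * ((1 / 2) * log x)) = x := by
  rw [← mul_assoc, show (2 : ℝ) * (1 / 2) = 1 by norm_num, one_mul, exp_log hx]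

lemma one_lt_mul_exp_iff {a t : ℝ} (ha : 0 < a) : 1 < a * exp t ↔ 0 < log a + t := by
  rw [← one_lt_exp_iff, exp_add, exp_log ha]

lemma mul_exp_lt_one_iff {a t : ℝ} (ha : 0 < a) : a * exp t < 1 ↔ log a + t < 0 := by
  rw [← exp_lt_one_iff, exp_add, exp_log ha]

lemma weight_ratio_eq {k k' e : ℝ} (he : e ≠ 0) (hD : k * k' * e - e⁻¹ ≠ 0)
    (hke : (k * e) ^ 2 ≠ 1) :
    e⁻¹ * ((k' - k) / (k * k' * e - e⁻¹) - k * e) /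
      ((k' - k) / (k * k' * e - e⁻¹) * (k * e) - 1) = k' := by
  have h : 1 - (k * e) ^ 2 ≠ 0 := sub_ne_zero.mpr hke.symm
  have hnum : (k' - k) / (k * k' * e - e⁻¹) - k * e
      = k' * (1 - (k * e) ^ 2) / (k * k' * e - e⁻¹) := by
    rw [eq_div_iff hD, sub_mul, div_mul_cancel₀ _ hD]
    field_simp
    ring
  have hden : (k' - k) / (k * k' * e - e⁻¹) * (k * e) - 1
      = e⁻¹ * (1 - (k * e) ^ 2) / (k * k' * e - e⁻¹) := by
    rw [eq_div_iff hD, sub_mul, mul_right_comm, div_mul_cancel₀ _ hD]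
    field_simp
    ring
  rw [hnum, hden, mul_div_assoc', div_div_div_cancel_right₀ hD,
    mul_div_mul_left _ _ (inv_ne_zero he), mul_div_cancel_right₀ _ h]

theorem curve_construction_general (κ κ' : ℝ) (h0 : 0 < κ) (h1 : κ < κ') :
    let βm := -(1/4) * Real.log (κ * κ')
    let βp := -(1/2) * Real.log κ
    βm < βp ∧
    ∀ β ∈ Set.Ioo βm βp,
      0 < κ * κ' * Real.exp (2*β) - Real.exp (-2*β) ∧
      (let K := (1/2) * Real.log ((κ' - κ) / (κ * κ' * Real.exp (2*β) - Real.exp (-2*β)))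
       let K' := β
       let K'' := β + (1/2) * Real.log κ
       Real.exp (2*(K'' - K')) = κ ∧
       Real.exp (-2*K') * (Real.exp (2*K) - Real.exp (2*K'')) /
         (Real.exp (2*(K+K'')) - 1) = κ') := by
  dsimp only
  have hκ' : 0 < κ' := h0.trans h1
  have hlog : log (κ * κ') = log κ + log κ' := log_mul h0.ne' hκ'.ne'
  refine ⟨by rw [hlog]; linarith [log_lt_log h0 h1], fun β ⟨hβm, hβp⟩ => ?_⟩
  set e := exp (2 * β)
  have he : 0 < e := exp_pos _
  have he_inv : exp (-2 * β) = e⁻¹ := by rw [neg_mul, exp_neg]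
  have hκκ'e : 1 < κ * κ' * e ^ 2 := by
    rw [sq, ← exp_add, ← two_mul, ← mul_assoc]
    exact (one_lt_mul_exp_iff (mul_pos h0 hκ')).2 (by linarith)
  have hκe : κ * e < 1 := (mul_exp_lt_one_iff h0).2 (by linarith)
  have hD : 0 < κ * κ' * e - e⁻¹ := by
    rw [show κ * κ' * e - e⁻¹ = (κ * κ' * e ^ 2 - 1) / e by field_simp]
    exact div_pos (sub_pos.2 hκκ'e) he
  have hK'' : exp (2 * (β + 1 / 2 * log κ)) = κ * e := by
    rw [mul_add, exp_add, exp_two_mul_half_mul_log h0, mul_comm]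
  rw [he_inv]
  refine ⟨hD, by rw [add_sub_cancel_left, exp_two_mul_half_mul_log h0], ?_⟩
  rw [hK'', mul_add 2 (1 / 2 * log _), exp_add, hK'',
    exp_two_mul_half_mul_log (div_pos (sub_pos.2 h1) hD)]
  exact weight_ratio_eq he.ne' hD.ne' (pow_lt_one₀ (by positivity) hκe two_ne_zero).ne

theorem curve_construction (κ κ' : ℝ) (h0 : 0 < κ) (h1 : κ < κ') (h2 : κ' ≤ 1) :
    let βm := -(1/4) * Real.log (κ * κ')
    let βp := -(1/2) * Real.log κ
    βm < βp ∧
    ∀ β ∈ Set.Ioo βm βp,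
      0 < κ * κ' * Real.exp (2*β) - Real.exp (-2*β) ∧
      (let K := (1/2) * Real.log ((κ' - κ) / (κ * κ' * Real.exp (2*β) - Real.exp (-2*β)))
       let K' := β
       let K'' := β + (1/2) * Real.log κ
       Real.exp (2*(K'' - K')) = κ ∧
       Real.exp (-2*K') * (Real.exp (2*K) - Real.exp (2*K'')) /
         (Real.exp (2*(K+K'')) - 1) = κ') :=
  curve_construction_general κ κ' h0 h1
end

section
/- With the curve γ of the previous statement and w1(β) = e^{2(K(β)+K''(β))} - 1, the map β ↦ w1(β) is a bijection from (β⁻, β⁺) onto (0, ∞), and -d/dβ log w1(β) = 4κ(κ'-κ)e^{-4β} / ((κκ' - e^{-4β})(e^{-4β} - κ²)) > 4κ/(κ'-κ) for all β ∈ (β⁻, β⁺). -/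
/-!
Put `u = exp (-4β)`. On `(β⁻, β⁺)` the map `β ↦ u` is a decreasing bijection onto `(κ², κκ')`,
and there `w1 = (u - κ²) / (κκ' - u)`, a Möbius map from `(κ², κκ')` onto `(0, ∞)`. The
derivative formula is the chain rule for this expression, and the lower bound follows from
AM-GM: `(κκ' - u)(u - κ²) ≤ (κκ' - κ²)² / 4`.
-/

open Real Set

lemma Real.bijOn_exp_const_mul_Ioo {a b c : ℝ} (hc : c < 0) (ha : 0 < a) (hb : 0 < b) :
    BijOn (fun x => exp (c * x)) (Ioo (log b / c) (log a / c)) (Ioo a b) := by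
  refine InvOn.bijOn (f' := fun y => log y / c) ⟨fun x _ => ?_, fun y hy => ?_⟩ ?_ ?_
  · simp only [log_exp]
    exact mul_div_cancel_left₀ _ hc.ne
  · dsimp only
    rw [mul_div_cancel₀ _ hc.ne, exp_log (ha.trans hy.1)]
  · rintro x ⟨hbx, hxa⟩
    rw [div_lt_iff_of_neg hc] at hbx
    rw [lt_div_iff_of_neg hc] at hxa
    constructor
    · rwa [← log_lt_iff_lt_exp ha, mul_comm]
    · rwa [← lt_log_iff_exp_lt hb, mul_comm]
  · rintro y ⟨hay, hyb⟩
    have hy : 0 < y := ha.trans hay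
    exact ⟨div_lt_div_of_neg_of_lt hc (log_lt_log hy hyb),
      div_lt_div_of_neg_of_lt hc (log_lt_log ha hay)⟩

lemma bijOn_sub_div_sub_Ioo {a b : ℝ} (hab : a < b) :
    BijOn (fun u => (u - a) / (b - u)) (Ioo a b) (Ioi 0) := by
  have hba : b - a ≠ 0 := (sub_pos.2 hab).ne'
  refine InvOn.bijOn (f' := fun y => (a + b * y) / (1 + y)) ⟨fun u hu => ?_, fun y hy => ?_⟩
    (fun u hu => div_pos (sub_pos.2 hu.1) (sub_pos.2 hu.2)) (fun y hy => ?_)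
  · have hbu : b - u ≠ 0 := (sub_pos.2 hu.2).ne'
    have hnum : a + b * ((u - a) / (b - u)) = u * ((b - a) / (b - u)) := by field_simp; ring
    have hden : 1 + (u - a) / (b - u) = (b - a) / (b - u) := by field_simp; ring
    dsimp only
    rw [hnum, hden, mul_div_cancel_right₀ _ (div_ne_zero hba hbu)]
  · have h1y : 1 + y ≠ 0 := by linarith [mem_Ioi.1 hy]
    have hnum : (a + b * y) / (1 + y) - a = y * ((b - a) / (1 + y)) := by field_simp; ring
    have hden : b - (a + b * y) / (1 + y) = (b - a) / (1 + y) := by field_simp; ring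
    dsimp only
    rw [hnum, hden, mul_div_cancel_right₀ _ (div_ne_zero hba h1y)]
  · have hy : 0 < y := hy
    have h1y : 0 < 1 + y := by linarith
    constructor
    · rw [lt_div_iff₀ h1y]; nlinarith
    · rw [div_lt_iff₀ h1y]; nlinarith

lemma HasDerivAt.log_sub_div_sub {f : ℝ → ℝ} {f' x a b : ℝ} (hf : HasDerivAt f f' x)
    (ha : f x ≠ a) (hb : f x ≠ b) :
    HasDerivAt (fun t => Real.log ((f t - a) / (b - f t)))
      (f' * (b - a) / ((f x - a) * (b - f x))) x := by
  have ha' : f x - a ≠ 0 := sub_ne_zero.2 ha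
  have hb' : b - f x ≠ 0 := sub_ne_zero.2 hb.symm
  refine (((hf.sub_const a).div (hf.const_sub b) hb').log (div_ne_zero ha' hb')).congr_deriv ?_
  simp only [Pi.div_apply]
  field_simp
  ring

lemma four_mul_div_sub_lt {a b u : ℝ} (ha : 0 < a) (hau : a < u) (hub : u < b) :
    4 * a / (b - a) < 4 * (b - a) * u / ((b - u) * (u - a)) := by
  have hba : 0 < b - a := by linarith
  calc 4 * a / (b - a) < 16 * u / (b - a) := div_lt_div_of_pos_right (by linarith) hba
    _ ≤ 4 * (b - a) * u / ((b - u) * (u - a)) := by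
      rw [div_le_div_iff₀ hba (mul_pos (by linarith) (by linarith))]
      -- AM-GM: `(b - a)² - 4 (b - u) (u - a) = (a + b - 2u)²`
      nlinarith [mul_nonneg (ha.trans hau).le (sq_nonneg (a + b - 2 * u))]

lemma w1_eq_sub_div_sub {κ κ' β : ℝ} (hκ : 0 < κ) (hκκ' : κ < κ')
    (hβ : exp (-4 * β) < κ * κ') :
    exp (2 * ((1/2) * log ((κ' - κ) / (κ * κ' * exp (2*β) - exp (-2*β))) +
        (β + (1/2) * log κ))) - 1
      = (exp (-4 * β) - κ^2) / (κ * κ' - exp (-4 * β)) := by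
  set u := exp (-4 * β)
  have hv : 0 < exp (2 * β) := exp_pos _
  have huv : exp (-2 * β) = u * exp (2 * β) := by rw [← exp_add]; ring_nf
  have hu : 0 < κ * κ' - u := sub_pos.2 hβ
  have hA : 0 < (κ' - κ) / ((κ * κ' - u) * exp (2 * β)) :=
    div_pos (sub_pos.2 hκκ') (mul_pos hu hv)
  rw [huv, ← sub_mul, show ∀ A, 2 * ((1/2) * log A + (β + (1/2) * log κ))
      = log A + 2 * β + log κ by intro A; ring,
    exp_add, exp_add, exp_log hA, exp_log hκ]
  have hcancel : (κ' - κ) / ((κ * κ' - u) * exp (2 * β)) * exp (2 * β) * κ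
      = κ * (κ' - κ) / (κ * κ' - u) := by
    field_simp
  rw [hcancel, div_sub_one hu.ne']
  congr 1
  ring

theorem curve_w1_properties_general (κ κ' : ℝ) (h0 : 0 < κ) (h1 : κ < κ') :
    let βm := -(1/4) * Real.log (κ * κ')
    let βp := -(1/2) * Real.log κ
    let K : ℝ → ℝ := fun β =>
      (1/2) * Real.log ((κ' - κ) / (κ * κ' * Real.exp (2*β) - Real.exp (-2*β)))
    let K'' : ℝ → ℝ := fun β => β + (1/2) * Real.log κ
    let w1 : ℝ → ℝ := fun β => Real.exp (2*(K β + K'' β)) - 1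
    Set.BijOn w1 (Set.Ioo βm βp) (Set.Ioi 0) ∧
    ∀ β ∈ Set.Ioo βm βp,
      HasDerivAt (fun t => Real.log (w1 t))
        (-(4*κ*(κ'-κ)*Real.exp (-4*β) /
            ((κ*κ' - Real.exp (-4*β)) * (Real.exp (-4*β) - κ^2)))) β ∧
      4*κ/(κ'-κ) <
        4*κ*(κ'-κ)*Real.exp (-4*β) /
          ((κ*κ' - Real.exp (-4*β)) * (Real.exp (-4*β) - κ^2)) := by
  intro βm βp K K'' w1
  have hκ2 : κ^2 < κ * κ' := by nlinarith
  have hdom : Ioo βm βp = Ioo (log (κ * κ') / -4) (log (κ^2) / -4) := by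
    rw [log_pow]; congr 1 <;> ring
  have hexp_bij := bijOn_exp_const_mul_Ioo (by norm_num : (-4 : ℝ) < 0) (pow_pos h0 2)
    (mul_pos h0 (h0.trans h1))
  rw [← hdom] at hexp_bij
  have hw1 : EqOn w1 (fun β => (exp (-4 * β) - κ^2) / (κ * κ' - exp (-4 * β))) (Ioo βm βp) :=
    fun β hβ => w1_eq_sub_div_sub h0 h1 (hexp_bij.mapsTo hβ).2
  refine ⟨((bijOn_sub_div_sub_Ioo hκ2).comp hexp_bij).congr hw1.symm, fun β hβ => ?_⟩
  obtain ⟨hu1, hu2⟩ := hexp_bij.mapsTo hβ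
  have hκκ' : κ * κ' - κ^2 = κ * (κ' - κ) := by ring
  constructor
  · have hlog := (((hasDerivAt_id' β).const_mul (-4)).exp).log_sub_div_sub hu1.ne' hu2.ne
    have hnear : (fun t => log (w1 t)) =ᶠ[nhds β]
        fun t => log ((exp (-4 * t) - κ^2) / (κ * κ' - exp (-4 * t))) := by
      filter_upwards [isOpen_Ioo.mem_nhds hβ] with t ht
      rw [hw1 ht]
    refine (hlog.congr_of_eventuallyEq hnear).congr_deriv ?_
    rw [hκκ']
    ring
  · convert four_mul_div_sub_lt (pow_pos h0 2) hu1 hu2 using 1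
    · rw [hκκ']
      field_simp
    · rw [hκκ']
      ring

theorem curve_w1_properties (κ κ' : ℝ) (h0 : 0 < κ) (h1 : κ < κ') (h2 : κ' ≤ 1) :
    let βm := -(1/4) * Real.log (κ * κ')
    let βp := -(1/2) * Real.log κ
    let K : ℝ → ℝ := fun β =>
      (1/2) * Real.log ((κ' - κ) / (κ * κ' * Real.exp (2*β) - Real.exp (-2*β)))
    let K'' : ℝ → ℝ := fun β => β + (1/2) * Real.log κ
    let w1 : ℝ → ℝ := fun β => Real.exp (2*(K β + K'' β)) - 1
    Set.BijOn w1 (Set.Ioo βm βp) (Set.Ioi 0) ∧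
    ∀ β ∈ Set.Ioo βm βp,
      HasDerivAt (fun t => Real.log (w1 t))
        (-(4*κ*(κ'-κ)*Real.exp (-4*β) /
            ((κ*κ' - Real.exp (-4*β)) * (Real.exp (-4*β) - κ^2)))) β ∧
      4*κ/(κ'-κ) <
        4*κ*(κ'-κ)*Real.exp (-4*β) /
          ((κ*κ' - Real.exp (-4*β)) * (Real.exp (-4*β) - κ^2)) :=
  curve_w1_properties_general κ κ' h0 h1
end

section
/- Let w2, w3 ∈ (0,1] and let μ be a probability measure on {-1,1}^V (an Ising-type measure with non-negative pair interactions, i.e. satisfying the second Griffiths inequality in the form μ[e,f ∉ D]·μ[e,f ∈ D] ≥ μ[e ∈ D, f ∉ D]·μ[e ∉ D, f ∈ D] for the disagreement-edge events D at two edges e, f). Then E_μ[w3^{1_{e∈D}+1_{f∈D}}]·E_μ[w2^{1_{e∈D}+1_{f∈D}}] ≥ E_μ[w2^{1_{f∈D}} w3^{1_{e∈D}}]·E_μ[w2^{1_{e∈D}} w3^{1_{f∈D}}]. -/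
open Finset

theorem griffiths_weight_inequality {S : Type*} [Fintype S]
    (μ : S → ℝ) (hμ : ∀ s, 0 ≤ μ s) (hsum : ∑ s, μ s = 1)
    (De Df : S → Prop) [DecidablePred De] [DecidablePred Df]
    (w2 w3 : ℝ) (hw2 : w2 ∈ Set.Ioc (0:ℝ) 1) (hw3 : w3 ∈ Set.Ioc (0:ℝ) 1)
    (griffiths :
      (∑ s, μ s * (if ¬De s ∧ ¬Df s then (1:ℝ) else 0)) *
          (∑ s, μ s * (if De s ∧ Df s then (1:ℝ) else 0)) ≥
        (∑ s, μ s * (if De s ∧ ¬Df s then (1:ℝ) else 0)) *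
          (∑ s, μ s * (if ¬De s ∧ Df s then (1:ℝ) else 0))) :
    (∑ s, μ s * w3 ^ ((if De s then 1 else 0) + (if Df s then 1 else 0))) *
        (∑ s, μ s * w2 ^ ((if De s then 1 else 0) + (if Df s then 1 else 0))) ≥
      (∑ s, μ s * (w2 ^ (if Df s then 1 else 0) * w3 ^ (if De s then 1 else 0))) *
        (∑ s, μ s * (w2 ^ (if De s then 1 else 0) * w3 ^ (if Df s then 1 else 0))) := by
  set A := ∑ s, μ s * (if ¬De s ∧ ¬Df s then (1:ℝ) else 0) with hA
  set B := ∑ s, μ s * (if De s ∧ ¬Df s then (1:ℝ) else 0) with hB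
  set C := ∑ s, μ s * (if ¬De s ∧ Df s then (1:ℝ) else 0) with hC
  set D := ∑ s, μ s * (if De s ∧ Df s then (1:ℝ) else 0) with hD
  have hsq : ∀ w : ℝ,
      ∑ s, μ s * w ^ ((if De s then 1 else 0) + (if Df s then 1 else 0)) =
        A + (B + C) * w + D * w ^ 2 := by
    intro w
    rw [hA, hB, hC, hD, add_mul, Finset.sum_mul, Finset.sum_mul, Finset.sum_mul,
      ← Finset.sum_add_distrib, ← Finset.sum_add_distrib, ← Finset.sum_add_distrib]
    apply Finset.sum_congr rfl
    intro s _
    by_cases h1 : De s <;> by_cases h2 : Df s <;> simp [h1, h2] <;> ring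
  have hmix : ∀ u v : ℝ,
      ∑ s, μ s * (u ^ (if Df s then 1 else 0) * v ^ (if De s then 1 else 0)) =
        A + B * v + C * u + D * (u * v) := by
    intro u v
    rw [hA, hB, hC, hD, Finset.sum_mul, Finset.sum_mul, Finset.sum_mul,
      ← Finset.sum_add_distrib, ← Finset.sum_add_distrib, ← Finset.sum_add_distrib]
    apply Finset.sum_congr rfl
    intro s _
    by_cases h1 : De s <;> by_cases h2 : Df s <;> simp [h1, h2] <;> ring
  have h1 := hsq w3
  have h2 := hsq w2
  have h3 := hmix w2 w3
  have h4' : ∑ s, μ s * (w2 ^ (if De s then 1 else 0) * w3 ^ (if Df s then 1 else 0)) =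
      A + B * w2 + C * w3 + D * (w3 * w2) := by
    have := hmix w3 w2
    rw [← this]
    apply Finset.sum_congr rfl
    intro s _
    ring
  rw [h1, h2, h3, h4']
  have key : 0 ≤ (A * D - B * C) * (w2 - w3) ^ 2 :=
    mul_nonneg (by linarith [griffiths]) (sq_nonneg _)
  nlinarith [key]
end
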